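/- arXiv:1803.05826 — 3 statements merged into one kernel-verified Lean document; each statement's English description precedes it below -/
import Mathlib

section
/- Let (A, ∘, ·) be a skew brace with λ_a(b) = a⁻¹ · (a ∘ b), ρ_a(b) = (a ∘ b) · a⁻¹. Let (X, ∘) be a left (A, ∘)-set and π: X → End(A, ·) a family of (A, ·)-endomorphisms. Then π is equivariant (π(a ∘ x) = λ_a ∘ π(x) ∘ ρ_a⁻¹) if and only if π_x(a ∘ b) = λ_a(π_{ā ∘ x}(b)) · π_x(a) for all a, b ∈ A and x ∈ X, where ā is the ∘-inverse of a. -/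
/-! Both `π_{a ∘ x}` and `a ⋄ π_x` are endomorphisms `f` of `(A, ·)` satisfying
`f (a ∘ b) = λ_a (π_x b) · f a`: for `a ⋄ π_x` this is the identity `ρ_ā (a ∘ b) = b · ρ_ā a`,
for `π_{a ∘ x}` it is the cocycle identity at `a ∘ x`. Taking `b = ā` pins down `f a`, and since
`b ↦ a ∘ b` is onto, such an `f` is unique. -/

structure SkewBrace (A : Type*) where
  circ : A → A → A
  cinv : A → A
  ce : A
  mul : A → A → A
  inv : A → A
  e : A
  circ_assoc : ∀ a b c, circ (circ a b) c = circ a (circ b c)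
  ce_circ : ∀ a, circ ce a = a
  circ_ce : ∀ a, circ a ce = a
  cinv_circ : ∀ a, circ (cinv a) a = ce
  circ_cinv : ∀ a, circ a (cinv a) = ce
  mul_assoc : ∀ a b c, mul (mul a b) c = mul a (mul b c)
  e_mul : ∀ a, mul e a = a
  mul_e : ∀ a, mul a e = a
  inv_mul : ∀ a, mul (inv a) a = e
  mul_inv : ∀ a, mul a (inv a) = e
  distrib : ∀ a b c, circ a (mul b c) = mul (mul (circ a b) (inv a)) (circ a c)

def SkewBrace.lam {A : Type*} (B : SkewBrace A) (a b : A) : A :=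
  B.mul (B.inv a) (B.circ a b)

def SkewBrace.rho {A : Type*} (B : SkewBrace A) (a b : A) : A :=
  B.mul (B.circ a b) (B.inv a)

/-- The diamond action `a ⋄ χ = λ_a ∘ χ ∘ ρ_a⁻¹` on `End(A, ·)`. -/
def SkewBrace.dia {A : Type*} (B : SkewBrace A) (a : A) (χ : A → A) : A → A :=
  fun b => B.lam a (χ (B.rho (B.cinv a) b))

namespace SkewBrace

variable {A : Type*} (B : SkewBrace A)

def IsMulEndo (f : A → A) : Prop :=
  ∀ u v, f (B.mul u v) = B.mul (f u) (f v)

theorem mul_left_cancel {a b c : A} (h : B.mul a b = B.mul a c) : b = c := by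
  have h' := congrArg (B.mul (B.inv a)) h
  rwa [← B.mul_assoc, ← B.mul_assoc, B.inv_mul, B.e_mul, B.e_mul] at h'

theorem mul_right_cancel {a b c : A} (h : B.mul b a = B.mul c a) : b = c := by
  have h' := congrArg (fun z => B.mul z (B.inv a)) h
  simpa only [B.mul_assoc, B.mul_inv, B.mul_e] using h'

theorem circ_e (a : A) : B.circ a B.e = a := by
  have h := B.distrib a B.e B.e
  rw [B.e_mul] at h
  have h' : B.mul (B.circ a B.e) (B.inv a) = B.e :=
    B.mul_right_cancel (a := B.circ a B.e) (by rw [B.e_mul, ← h])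
  exact B.mul_right_cancel (a := B.inv a) (by rw [h', B.mul_inv])

theorem ce_eq_e : B.ce = B.e := by
  rw [← B.circ_e B.ce, B.ce_circ]

theorem IsMulEndo.map_e {B : SkewBrace A} {f : A → A} (hf : B.IsMulEndo f) : f B.e = B.e :=
  B.mul_left_cancel (a := f B.e) (by rw [← hf, B.e_mul, B.mul_e])

theorem isMulEndo_lam (a : A) : B.IsMulEndo (B.lam a) := by
  intro u v
  simp only [lam, B.distrib, B.mul_assoc]

theorem lam_e (a : A) : B.lam a B.e = B.e :=
  (B.isMulEndo_lam a).map_e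

theorem rho_e (a : A) : B.rho a B.e = B.e := by
  rw [rho, B.circ_e, B.mul_inv]

theorem cinv_circ_circ (a b : A) : B.circ (B.cinv a) (B.circ a b) = b := by
  rw [← B.circ_assoc, B.cinv_circ, B.ce_circ]

theorem circ_circ_cinv (a b : A) : B.circ a (B.circ (B.cinv a) b) = b := by
  rw [← B.circ_assoc, B.circ_cinv, B.ce_circ]

theorem rho_cinv_circ (a b : A) :
    B.rho (B.cinv a) (B.circ a b) = B.mul b (B.rho (B.cinv a) a) := by
  rw [rho, rho, B.cinv_circ_circ, B.cinv_circ, B.ce_eq_e, B.e_mul]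

theorem dia_apply_e (a : A) {χ : A → A} (hχ : B.IsMulEndo χ) : B.dia a χ B.e = B.e := by
  rw [dia, B.rho_e, hχ.map_e, B.lam_e]

theorem dia_apply_circ (a b : A) {χ : A → A} (hχ : B.IsMulEndo χ) :
    B.dia a χ (B.circ a b) = B.mul (B.lam a (χ b)) (B.dia a χ a) := by
  rw [dia, dia, B.rho_cinv_circ, hχ, B.isMulEndo_lam]

theorem eq_of_map_e_of_apply_circ {a : A} {c f g : A → A}
    (hf_e : f B.e = B.e) (hg_e : g B.e = B.e)
    (hf : ∀ b, f (B.circ a b) = B.mul (c b) (f a))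
    (hg : ∀ b, g (B.circ a b) = B.mul (c b) (g a)) : f = g := by
  have ha : f a = g a :=
    B.mul_left_cancel (a := c (B.cinv a))
      (by rw [← hf, ← hg, B.circ_cinv, B.ce_eq_e, hf_e, hg_e])
  funext d
  rw [← B.circ_circ_cinv a d, hf, hg, ha]

end SkewBrace

/-- Equivariance of `π` is equivalent to the twisted cocycle identity. -/
theorem skewBrace_equivariant_iff_cocycle {A X : Type*} (B : SkewBrace A)
    (act : A → X → X)
    (hact_e : ∀ x, act B.ce x = x)
    (hact : ∀ a b x, act (B.circ a b) x = act a (act b x))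
    (π : X → A → A)
    (hπ : ∀ x a b, π x (B.mul a b) = B.mul (π x a) (π x b)) :
    (∀ a x, π (act a x) = B.dia a (π x)) ↔
      (∀ (a b : A) (x : X),
        π x (B.circ a b) = B.mul (B.lam a (π (act (B.cinv a) x) b)) (π x a)) := by
  constructor
  · intro hequiv a b x
    have hx : π x = B.dia a (π (act (B.cinv a) x)) := by
      rw [← hequiv, ← hact, B.circ_cinv, hact_e]
    rw [hx]
    exact B.dia_apply_circ a b (hπ _)
  · intro hcocycle a x
    have hx : act (B.cinv a) (act a x) = x := by
      rw [← hact, B.cinv_circ, hact_e]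
    refine B.eq_of_map_e_of_apply_circ (a := a) (c := fun b => B.lam a (π x b))
      (SkewBrace.IsMulEndo.map_e (hπ _)) (B.dia_apply_e a (hπ x)) (fun b => ?_)
      (fun b => B.dia_apply_circ a b (hπ x))
    rw [hcocycle, hx]
end

section
/- Let (A, ∘, r) be a group with braiding and let (X, m_X, k) be a braided action. Then k: A × X → A × X satisfies the reflection equation with respect to r: (r × id_X)(id_A × k)(r × id_X)(id_A × k) = (id_A × k)(r × id_X)(id_A × k)(r × id_X) as maps on A × A × X. -/
structure BraidedGroup (A : Type*) where
  circ : A → A → A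
  cinv : A → A
  ce : A
  circ_assoc : ∀ a b c, circ (circ a b) c = circ a (circ b c)
  ce_circ : ∀ a, circ ce a = a
  circ_ce : ∀ a, circ a ce = a
  cinv_circ : ∀ a, circ (cinv a) a = ce
  circ_cinv : ∀ a, circ a (cinv a) = ce
  r : A × A → A × A
  r_rule1 : ∀ a b c : A,
    r (circ a b, c) =
      ((r (a, (r (b, c)).1)).1, circ (r (a, (r (b, c)).1)).2 (r (b, c)).2)
  r_rule2 : ∀ a b c : A,
    r (a, circ b c) =
      (circ (r (a, b)).1 (r ((r (a, b)).2, c)).1, (r ((r (a, b)).2, c)).2)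
  r_unit1 : ∀ a, r (a, ce) = (ce, a)
  r_unit2 : ∀ a, r (ce, a) = (a, ce)
  r_comp : ∀ a b, circ (r (a, b)).1 (r (a, b)).2 = circ a b

/-- `r` acting on the first two tensor factors. -/
def stepR {A X : Type*} (r : A × A → A × A) (p : A × A × X) : A × A × X :=
  ((r (p.1, p.2.1)).1, (r (p.1, p.2.1)).2, p.2.2)

/-- a map `k : A × X → A × X` acting on the last two tensor factors. -/
def stepK {A X : Type*} (k : A × X → A × X) (p : A × A × X) : A × A × X :=
  (p.1, k p.2)

/-- the multiplication `m × id`. -/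
def collM {A X : Type*} (m : A → A → A) (p : A × A × X) : A × X :=
  (m p.1 p.2.1, p.2.2)

/-- the action `id × m_X`. -/
def collMX {A X : Type*} (mX : A → X → X) (p : A × A × X) : A × X :=
  (p.1, mX p.2.1 p.2.2)

/-!
Both sides agree after applying `m × id_X`: by `m ∘ r = m` and the first axiom of `k`, each
becomes `k ∘ (m × id_X)`. Their first coordinates agree because the second axiom of `k`, applied
at `(a, b, x)` and at `(a, k (b, x))`, computes `k (a, b · x)` in two ways, the arguments being
equal by `m_X ∘ k = m_X`. Left cancellation in `(A, ∘)` then recovers the second coordinate.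
-/

namespace BraidedGroup

variable {A X : Type*} (G : BraidedGroup A)

theorem circ_left_cancel {a u v : A} (h : G.circ a u = G.circ a v) : u = v := by
  have h' := congrArg (G.circ (G.cinv a)) h
  rwa [← G.circ_assoc, ← G.circ_assoc, G.cinv_circ, G.ce_circ, G.ce_circ] at h'

theorem collM_stepR (p : A × A × X) : collM G.circ (stepR G.r p) = collM G.circ p :=
  congrArg (·, p.2.2) (G.r_comp p.1 p.2.1)

theorem eq_of_fst_eq_of_collM_eq {q q' : A × A × X} (hfst : q.1 = q'.1)
    (hM : collM G.circ q = collM G.circ q') : q = q' := by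
  obtain ⟨a, b, x⟩ := q
  obtain ⟨a', b', x'⟩ := q'
  simp only [collM, Prod.mk.injEq] at hfst hM
  subst hfst
  rw [G.circ_left_cancel hM.1, hM.2]

end BraidedGroup

theorem collMX_stepK {A X : Type*} {mX : A → X → X} {k : A × X → A × X}
    (hk : ∀ p : A × X, mX (k p).1 (k p).2 = mX p.1 p.2) (p : A × A × X) :
    collMX mX (stepK k p) = collMX mX p :=
  congrArg (p.1, ·) (hk p.2)

theorem braidedAction_solves_reflection_general {A X : Type*} (G : BraidedGroup A)
    (mX : A → X → X)
    (k : A × X → A × X)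
    (h1 : ∀ p : A × A × X,
      k (collM G.circ p) = collM G.circ (stepK k (stepR G.r (stepK k p))))
    (h2 : ∀ p : A × A × X,
      k (collMX mX p) = collMX mX (stepR G.r (stepK k (stepR G.r p))))
    (h4 : ∀ p : A × X, mX (k p).1 (k p).2 = mX p.1 p.2) :
    ∀ p : A × A × X,
      stepR G.r (stepK k (stepR G.r (stepK k p))) =
        stepK k (stepR G.r (stepK k (stepR G.r p))) := by
  intro p
  apply G.eq_of_fst_eq_of_collM_eq
  · have hL := h2 (stepK k p)
    rw [collMX_stepK h4] at hL
    exact (congrArg Prod.fst (hL.symm.trans (h2 p)) :)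
  · calc collM G.circ (stepR G.r (stepK k (stepR G.r (stepK k p))))
        = collM G.circ (stepK k (stepR G.r (stepK k p))) := G.collM_stepR _
      _ = k (collM G.circ p) := (h1 p).symm
      _ = k (collM G.circ (stepR G.r p)) := by rw [G.collM_stepR]
      _ = collM G.circ (stepK k (stepR G.r (stepK k (stepR G.r p)))) := h1 _

/-- Any braided action satisfies the reflection equation. -/
theorem braidedAction_solves_reflection {A X : Type*} (G : BraidedGroup A)
    (mX : A → X → X)
    (hmX_e : ∀ x, mX G.ce x = x)
    (hmX : ∀ a b x, mX (G.circ a b) x = mX a (mX b x))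
    (k : A × X → A × X)
    (h1 : ∀ p : A × A × X,
      k (collM G.circ p) = collM G.circ (stepK k (stepR G.r (stepK k p))))
    (h2 : ∀ p : A × A × X,
      k (collMX mX p) = collMX mX (stepR G.r (stepK k (stepR G.r p))))
    (h3 : ∀ x : X, k (G.ce, x) = (G.ce, x))
    (h4 : ∀ p : A × X, mX (k p).1 (k p).2 = mX p.1 p.2) :
    ∀ p : A × A × X,
      stepR G.r (stepK k (stepR G.r (stepK k p))) =
        stepK k (stepR G.r (stepK k (stepR G.r p))) :=
  braidedAction_solves_reflection_general G mX k h1 h2 h4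
end

section
/- Let (A, ∘, r) be a group with braiding, r(a,b) = (a ▷ b, a ◁ b). Then (a₁, a₂) ∘_⋈ (b₁, b₂) := (a₁ ∘ (a₂ ▷ b₁), (a₂ ◁ b₁) ∘ b₂) defines a group structure on A × A with unit (e, e) and inverse (a, b)⁻¹ = (b̄ ▷ ā, b̄ ◁ ā), and the multiplication map m_A: (A × A, ∘_⋈) → (A, ∘), (a, b) ↦ a ∘ b, is a group homomorphism. -/
namespace BraidedGroup

variable {A : Type*} (G : BraidedGroup A)

theorem r_circ_left_fst (a b c : A) :
    (G.r (G.circ a b, c)).1 = (G.r (a, (G.r (b, c)).1)).1 := by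
  rw [G.r_rule1]

theorem r_circ_left_snd (a b c : A) :
    (G.r (G.circ a b, c)).2 = G.circ (G.r (a, (G.r (b, c)).1)).2 (G.r (b, c)).2 := by
  rw [G.r_rule1]

theorem r_circ_right_fst (a b c : A) :
    (G.r (a, G.circ b c)).1 = G.circ (G.r (a, b)).1 (G.r ((G.r (a, b)).2, c)).1 := by
  rw [G.r_rule2]

theorem r_circ_right_snd (a b c : A) :
    (G.r (a, G.circ b c)).2 = (G.r ((G.r (a, b)).2, c)).2 := by
  rw [G.r_rule2]

def twistedMul (p q : A × A) : A × A :=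
  (G.circ p.1 (G.r (p.2, q.1)).1, G.circ (G.r (p.2, q.1)).2 q.2)

def twistedInv (p : A × A) : A × A :=
  G.r (G.cinv p.2, G.cinv p.1)

theorem twistedMul_assoc (p q s : A × A) :
    G.twistedMul (G.twistedMul p q) s = G.twistedMul p (G.twistedMul q s) := by
  ext <;> simp only [twistedMul, r_circ_left_fst, r_circ_left_snd, r_circ_right_fst,
    r_circ_right_snd, G.circ_assoc]

theorem ce_twistedMul (p : A × A) : G.twistedMul (G.ce, G.ce) p = p := by
  simp [twistedMul, G.r_unit2, G.ce_circ]

theorem twistedMul_ce (p : A × A) : G.twistedMul p (G.ce, G.ce) = p := by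
  simp [twistedMul, G.r_unit1, G.circ_ce]

theorem twistedMul_twistedInv (p : A × A) : G.twistedMul p (G.twistedInv p) = (G.ce, G.ce) := by
  refine Prod.ext ?_ ?_
  · calc G.circ p.1 (G.r (p.2, (G.r (G.cinv p.2, G.cinv p.1)).1)).1
        = G.circ p.1 (G.r (G.circ p.2 (G.cinv p.2), G.cinv p.1)).1 := by rw [r_circ_left_fst]
      _ = G.ce := by simp [G.circ_cinv, G.r_unit2]
  · calc G.circ (G.r (p.2, (G.r (G.cinv p.2, G.cinv p.1)).1)).2 (G.r (G.cinv p.2, G.cinv p.1)).2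
        = (G.r (G.circ p.2 (G.cinv p.2), G.cinv p.1)).2 := by rw [r_circ_left_snd]
      _ = G.ce := by simp [G.circ_cinv, G.r_unit2]

theorem twistedInv_twistedMul (p : A × A) : G.twistedMul (G.twistedInv p) p = (G.ce, G.ce) := by
  refine Prod.ext ?_ ?_
  · calc G.circ (G.r (G.cinv p.2, G.cinv p.1)).1 (G.r ((G.r (G.cinv p.2, G.cinv p.1)).2, p.1)).1
        = (G.r (G.cinv p.2, G.circ (G.cinv p.1) p.1)).1 := by rw [r_circ_right_fst]
      _ = G.ce := by simp [G.cinv_circ, G.r_unit1]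
  · calc G.circ (G.r ((G.r (G.cinv p.2, G.cinv p.1)).2, p.1)).2 p.2
        = G.circ (G.r (G.cinv p.2, G.circ (G.cinv p.1) p.1)).2 p.2 := by rw [r_circ_right_snd]
      _ = G.ce := by simp [G.cinv_circ, G.r_unit1]

theorem circ_twistedMul (p q : A × A) :
    G.circ (G.twistedMul p q).1 (G.twistedMul p q).2
      = G.circ (G.circ p.1 p.2) (G.circ q.1 q.2) := by
  calc G.circ (G.circ p.1 (G.r (p.2, q.1)).1) (G.circ (G.r (p.2, q.1)).2 q.2)
      = G.circ p.1 (G.circ (G.circ (G.r (p.2, q.1)).1 (G.r (p.2, q.1)).2) q.2) := by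
        simp only [G.circ_assoc]
    _ = G.circ p.1 (G.circ (G.circ p.2 q.1) q.2) := by rw [G.r_comp]
    _ = G.circ (G.circ p.1 p.2) (G.circ q.1 q.2) := by simp only [G.circ_assoc]

end BraidedGroup

/-- The twisted product `∘_⋈` on `A × A` is a group structure with unit `(e, e)`,
inverse `(a, b)⁻¹ = (b̄ ▷ ā, b̄ ◁ ā)`, and the multiplication map is a homomorphism. -/
theorem twistedProduct_group {A : Type*} (G : BraidedGroup A)
    (tm : A × A → A × A → A × A)
    (htm : ∀ p q, tm p q =
      (G.circ p.1 ((G.r (p.2, q.1)).1), G.circ ((G.r (p.2, q.1)).2) q.2)) :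
    (∀ p q s, tm (tm p q) s = tm p (tm q s)) ∧
    (∀ p, tm (G.ce, G.ce) p = p) ∧
    (∀ p, tm p (G.ce, G.ce) = p) ∧
    (∀ p : A × A, tm p (G.r (G.cinv p.2, G.cinv p.1)) = (G.ce, G.ce)) ∧
    (∀ p : A × A, tm (G.r (G.cinv p.2, G.cinv p.1)) p = (G.ce, G.ce)) ∧
    (∀ p q, G.circ (tm p q).1 (tm p q).2 = G.circ (G.circ p.1 p.2) (G.circ q.1 q.2)) := by
  obtain rfl : tm = G.twistedMul := funext fun p => funext (htm p)
  exact ⟨G.twistedMul_assoc, G.ce_twistedMul, G.twistedMul_ce, G.twistedMul_twistedInv,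
    G.twistedInv_twistedMul, G.circ_twistedMul⟩
end
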